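/- Let a₈, a₁₀, a₁₃, a₁₄, b₈, b₁₀ ∈ ℂ and define the 3×3 matrices: M₁ = a₈·E₁₁ + b₈·E₃₂, M₂ = a₁₀·E₂₁ + b₁₀·E₃₂, M₃ = a₁₃·E₁₁, M₄ = a₁₄·E₂₁. Then there exist 3×3 complex mat600rices L₁, L₂, L₃, with L₁ supported on the entries (1,1) and (3,2), L₂ supported on the entries (2,1) and (3,2), and L₃ supported on the entry (1,1) (in particular all three are strictly incoherent Kraus operators), such that ∑ₖ₌₁⁴ Mₖ ρ Mₖ† = ∑ₖ₌₁³ Lₖ ρ Lₖ† for all ρ ∈ M₃(ℂ). -/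

import Mathlib

/-!
The map `ρ ↦ ∑ᵢ Kᵢ ρ Kᵢᴴ` with `Kᵢ = ∑ₚ vᵢₚ Bₚ` depends on the coefficient vectors `vᵢ` only
through their Gram matrix `∑ᵢ vᵢ vᵢᴴ`. With `B = (E₀₀, E₁₀, E₂₁)` no `Mₖ` involves both `E₀₀` and
`E₁₀`, so the Gram matrix of the `Mₖ` is positive semidefinite with vanishing `(E₀₀, E₁₀)` entry.
Factor its `{E₁₀, E₂₁}` block as `L₂`'s coefficients plus a remainder `r E₂₁`, then factor the
`{E₀₀, E₂₁}` block, with the remainder added, as the coefficients of `L₁` and `L₃`; each step is a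
triangular factorization of a positive semidefinite `2 × 2` matrix.
-/

open Matrix

/-- The 3×3 matrix unit with a 1 in row `j`, column `k` (0-indexed). -/
def E (j k : Fin 3) : Matrix (Fin 3) (Fin 3) ℂ := Matrix.single j k 1

/-- `L` is supported on the set `S` of (row, column) positions: every entry of
`L` outside `S` vanishes. -/
def SupportedOn (L : Matrix (Fin 3) (Fin 3) ℂ) (S : Set (Fin 3 × Fin 3)) : Prop :=
  ∀ p q, L p q ≠ 0 → (p, q) ∈ S

section Gram

variable {R n m ι κ : Type*} [CommRing R] [StarRing R] [Fintype n] [Fintype m] [Fintype ι]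
  [Fintype κ]

theorem kraus_sum_eq_sum_gram_smul (B : m → Matrix n n R) (v : ι → m → R) (ρ : Matrix n n R) :
    ∑ i, (∑ p, v i p • B p) * ρ * (∑ p, v i p • B p)ᴴ =
      ∑ p, ∑ q, (∑ i, vecMulVec (v i) (star (v i))) p q • (B p * ρ * (B q)ᴴ) := by
  simp only [conjTranspose_sum, conjTranspose_smul, Finset.sum_mul, Finset.mul_sum,
    smul_mul_assoc, mul_smul_comm, Finset.smul_sum, smul_smul, Matrix.sum_apply,
    vecMulVec_apply, Finset.sum_smul, Pi.star_apply]
  rw [Finset.sum_comm_cycle]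
  refine Finset.sum_congr rfl fun p _ => ?_
  rw [Finset.sum_comm]
  simp only [mul_comm]

theorem kraus_sum_eq_of_gram_eq (B : m → Matrix n n R) (v : ι → m → R) (w : κ → m → R)
    (h : ∑ i, vecMulVec (v i) (star (v i)) = ∑ j, vecMulVec (w j) (star (w j)))
    (ρ : Matrix n n R) :
    ∑ i, (∑ p, v i p • B p) * ρ * (∑ p, v i p • B p)ᴴ =
      ∑ j, (∑ p, w j p • B p) * ρ * (∑ p, w j p • B p)ᴴ := by
  rw [kraus_sum_eq_sum_gram_smul, kraus_sum_eq_sum_gram_smul, h]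

end Gram

section Factor

open Complex ComplexConjugate

/-- `[[p, q], [conj q, t]] = U Uᴴ` with `U = [[α, γ], [β, 0]]`. -/
theorem exists_factor_of_normSq_le_mul {p t : ℝ} {q : ℂ} (hp : 0 ≤ p) (ht : 0 ≤ t)
    (hq : normSq q ≤ p * t) :
    ∃ α β γ : ℂ, normSq α + normSq γ = p ∧ α * conj β = q ∧ normSq β = t := by
  have hqt : normSq q / t ≤ p := div_le_of_le_mul₀ ht hp hq
  refine ⟨q / √t, √t, √(p - normSq q / t), ?_, ?_, ?_⟩
  · rw [normSq_div, normSq_ofReal, normSq_ofReal, Real.mul_self_sqrt ht,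
      Real.mul_self_sqrt (sub_nonneg.2 hqt)]
    ring
  · rcases ht.eq_or_lt with rfl | ht
    · have hq0 : q = 0 := normSq_eq_zero.1 (le_antisymm (by simpa using hq) (normSq_nonneg q))
      simp [hq0]
    · rw [conj_ofReal, div_mul_cancel₀]
      exact_mod_cast (Real.sqrt_pos.2 ht).ne'
  · rw [normSq_ofReal, Real.mul_self_sqrt ht]

theorem exists_gram_eq (a₈ a₁₀ a₁₃ a₁₄ b₈ b₁₀ : ℂ) :
    ∃ α₁ β₁ α₂ β₂ γ : ℂ,
      ∑ i, vecMulVec (![![a₈, 0, b₈], ![0, a₁₀, b₁₀], ![a₁₃, 0, 0], ![0, a₁₄, 0]] i)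
          (star (![![a₈, 0, b₈], ![0, a₁₀, b₁₀], ![a₁₃, 0, 0], ![0, a₁₄, 0]] i)) =
        ∑ j, vecMulVec (![![α₁, 0, β₁], ![0, α₂, β₂], ![γ, 0, 0]] j)
          (star (![![α₁, 0, β₁], ![0, α₂, β₂], ![γ, 0, 0]] j)) := by
  obtain ⟨β₂, α₂, r, hb₁₀, hba₁₀, ha₁₀⟩ :=
    exists_factor_of_normSq_le_mul (normSq_nonneg b₁₀)
      (add_nonneg (normSq_nonneg a₁₀) (normSq_nonneg a₁₄)) (q := b₁₀ * conj a₁₀) (by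
        rw [normSq_mul, normSq_conj]
        nlinarith [normSq_nonneg a₁₄, normSq_nonneg b₁₀])
  obtain ⟨α₁, β₁, γ, ha₈, hab₈, hb₈⟩ :=
    exists_factor_of_normSq_le_mul (add_nonneg (normSq_nonneg a₈) (normSq_nonneg a₁₃))
      (add_nonneg (normSq_nonneg b₈) (normSq_nonneg r)) (q := a₈ * conj b₈) (by
        rw [normSq_mul, normSq_conj]
        nlinarith [normSq_nonneg a₈, normSq_nonneg a₁₃, normSq_nonneg b₈, normSq_nonneg r])
  refine ⟨α₁, β₁, α₂, β₂, γ, ?_⟩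
  have hb : normSq β₁ + normSq β₂ = normSq b₈ + normSq b₁₀ := by linarith
  have hba₈ : β₁ * conj α₁ = b₈ * conj a₈ := by simpa [mul_comm] using congrArg conj hab₈
  have hab₁₀ : α₂ * conj β₂ = a₁₀ * conj b₁₀ := by simpa [mul_comm] using congrArg conj hba₁₀
  ext p q
  simp only [Matrix.sum_apply, vecMulVec_apply, Fin.sum_univ_succ, Pi.star_apply]
  fin_cases p <;> fin_cases q <;>
    simp [mul_conj, ← ofReal_add, ha₈, hab₈, hba₈, ha₁₀, hab₁₀, hba₁₀, hb]

end Factor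

theorem supportedOn_smul_E (a : ℂ) (i j : Fin 3) : SupportedOn (a • E i j) {(i, j)} := by
  intro p q h
  rw [E, smul_single, single_apply] at h
  split_ifs at h with hij
  · obtain ⟨rfl, rfl⟩ := hij
    rfl
  · exact absurd rfl h

theorem SupportedOn.add {A B : Matrix (Fin 3) (Fin 3) ℂ} {S T : Set (Fin 3 × Fin 3)}
    (hA : SupportedOn A S) (hB : SupportedOn B T) : SupportedOn (A + B) (S ∪ T) := by
  intro p q h
  by_contra hST
  rw [Set.mem_union, not_or] at hST
  rw [Matrix.add_apply, not_imp_comm.1 (hA p q) hST.1, not_imp_comm.1 (hB p q) hST.2,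
    add_zero] at h
  exact h rfl

theorem reduce_8_10_13_14 (a₈ a₁₀ a₁₃ a₁₄ b₈ b₁₀ : ℂ) :
    ∃ L₁ L₂ L₃ : Matrix (Fin 3) (Fin 3) ℂ,
      SupportedOn L₁ {(0, 0), (2, 1)} ∧
      SupportedOn L₂ {(1, 0), (2, 1)} ∧
      SupportedOn L₃ {(0, 0)} ∧
      ∀ ρ : Matrix (Fin 3) (Fin 3) ℂ,
        (a₈ • E 0 0 + b₈ • E 2 1) * ρ * (a₈ • E 0 0 + b₈ • E 2 1)ᴴ +
        (a₁₀ • E 1 0 + b₁₀ • E 2 1) * ρ * (a₁₀ • E 1 0 + b₁₀ • E 2 1)ᴴ +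
        (a₁₃ • E 0 0) * ρ * (a₁₃ • E 0 0)ᴴ +
        (a₁₄ • E 1 0) * ρ * (a₁₄ • E 1 0)ᴴ =
        L₁ * ρ * L₁ᴴ + L₂ * ρ * L₂ᴴ + L₃ * ρ * L₃ᴴ := by
  obtain ⟨α₁, β₁, α₂, β₂, γ, hgram⟩ := exists_gram_eq a₈ a₁₀ a₁₃ a₁₄ b₈ b₁₀
  refine ⟨α₁ • E 0 0 + β₁ • E 2 1, α₂ • E 1 0 + β₂ • E 2 1, γ • E 0 0,
    (supportedOn_smul_E _ _ _).add (supportedOn_smul_E _ _ _),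
    (supportedOn_smul_E _ _ _).add (supportedOn_smul_E _ _ _), supportedOn_smul_E _ _ _,
    fun ρ => ?_⟩
  simpa [Fin.sum_univ_succ, add_assoc] using
    kraus_sum_eq_of_gram_eq ![E 0 0, E 1 0, E 2 1] _ _ hgram ρ
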